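/- arXiv:1905.02243 — 9 statements merged into one kernel-verified Lean document; each statement's English description precedes it below -/
import Mathlib

section
/- Let X be a Hausdorff topological space whose topology is generated by a base of open order-convex subsets with respect to a linear order ≤ on X. Then the linear order ≤ (viewed as a set of pairs) is a closed subset of X × X. -/
/-- In a Hausdorff space whose topology has a base of open
order-convex sets with respect to a linear order (a GO-space), the order
relation is closed in `X × X`. -/
theorem go_space_order_closed {X : Type*} [TopologicalSpace X] [T2Space X] [LinearOrder X]
    (hB : ∃ B : Set (Set X), TopologicalSpace.IsTopologicalBasis B ∧ ∀ s ∈ B, s.OrdConnected) :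
    IsClosed {p : X × X | p.1 ≤ p.2} := by
  rw [← isOpen_compl_iff, isOpen_prod_iff]
  intro a b hab
  simp only [Set.mem_compl_iff, Set.mem_setOf_eq, not_le] at hab
  obtain ⟨B, hBasis, hConv⟩ := hB
  obtain ⟨u, v, hu, hv, ha, hb, huv⟩ := t2_separation hab.ne'
  obtain ⟨U, hU, haU, hUu⟩ := hBasis.exists_subset_of_mem_open ha hu
  obtain ⟨V, hV, hbV, hVv⟩ := hBasis.exists_subset_of_mem_open hb hv
  refine ⟨U, V, hBasis.isOpen hU, hBasis.isOpen hV, haU, hbV, ?_⟩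
  rintro ⟨x, y⟩ ⟨hxU, hyV⟩
  simp only [Set.mem_compl_iff, Set.mem_setOf_eq, not_le]
  by_contra h
  push_neg at h
  have hdisj : ∀ z, z ∈ U → z ∈ V → False := by
    intro z hzU hzV
    exact huv.ne_of_mem (hUu hzU) (hVv hzV) rfl
  have hya : y < a := by
    by_contra hya
    push_neg at hya
    exact hdisj a haU ((hConv V hV).out hbV hyV ⟨hab.le, hya⟩)
  exact hdisj y ((hConv U hU).out hxU haU ⟨h, hya.le⟩) hyV
end

section
/- Let Φ : X ⊸ Y be an upper semicontinuous compact-valued multimap from a topological space X to a GO-space Y, and let f : X → Y assign to each x the smallest element of Φ(x). Then for every upper open set U ⊆ Y (open and such that u ∈ U and u ≤ y implies y ∈ U), the preimage f⁻¹(U) is open in X. -/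
/-- If `Φ : X ⊸ Y` is an upper semicontinuous compact-valued multimap
into a GO-space `Y` and `f` assigns to each `x` the smallest element of `Φ x`,
then the preimage under `f` of every upper open set is open. -/
theorem min_selection_preimage_upper_open {X Y : Type*} [TopologicalSpace X]
    [TopologicalSpace Y] [T2Space Y] [LinearOrder Y]
    (hB : ∃ B : Set (Set Y), TopologicalSpace.IsTopologicalBasis B ∧ ∀ s ∈ B, s.OrdConnected)
    (Φ : X → Set Y)
    (husc : ∀ F : Set Y, IsClosed F → IsClosed {x | (Φ x ∩ F).Nonempty})
    (hcomp : ∀ x, (Φ x).Nonempty ∧ IsCompact (Φ x))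
    (f : X → Y) (hf : ∀ x, f x ∈ Φ x ∧ ∀ y ∈ Φ x, f x ≤ y)
    (U : Set Y) (hUopen : IsOpen U) (hUupper : ∀ u ∈ U, ∀ y, u ≤ y → y ∈ U) :
    IsOpen (f ⁻¹' U) := by
  have key : f ⁻¹' U = {x | (Φ x ∩ Uᶜ).Nonempty}ᶜ := by
    ext x
    simp only [Set.mem_preimage, Set.mem_compl_iff, Set.mem_setOf_eq]
    constructor
    · rintro hx ⟨y, hyΦ, hyU⟩
      exact hyU (hUupper _ hx _ ((hf x).2 y hyΦ))
    · intro h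
      by_contra hfx
      exact h ⟨f x, (hf x).1, hfx⟩
  rw [key]
  exact (husc Uᶜ hUopen.isClosed_compl).isOpen_compl
end

section
/- Let Y be a countably cellular GO-space and L ⊆ Y a lower set (a ∈ L and y ≤ a implies y ∈ L) without a largest element. Then L has a countable cofinal subset, i.e., a countable C ⊆ L such that every x ∈ L satisfies x ≤ c for some c ∈ C. -/
open Set

private lemma go_isOpen_Ioi {Y : Type*} [TopologicalSpace Y] [T2Space Y] [LinearOrder Y]
    (hB : ∃ B : Set (Set Y), TopologicalSpace.IsTopologicalBasis B ∧ ∀ s ∈ B, s.OrdConnected)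
    (a : Y) : IsOpen (Set.Ioi a) := by
  obtain ⟨B, hBasis, hconv⟩ := hB
  rw [isOpen_iff_forall_mem_open]
  intro x hx
  obtain ⟨U, V, hU, hV, hxU, haV, hUV⟩ := t2_separation (ne_of_gt hx)
  obtain ⟨u, huB, hxu, huU⟩ := hBasis.exists_subset_of_mem_open hxU hU
  obtain ⟨v, hvB, hav, hvV⟩ := hBasis.exists_subset_of_mem_open haV hV
  refine ⟨u, ?_, hBasis.isOpen huB, hxu⟩
  intro w hw
  by_contra hwa
  have : a ∈ u := (hconv u huB).out hw hxu ⟨le_of_not_gt hwa, le_of_lt hx⟩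
  exact hUV.le_bot ⟨huU this, hvV hav⟩

private lemma go_isOpen_Iio {Y : Type*} [TopologicalSpace Y] [T2Space Y] [LinearOrder Y]
    (hB : ∃ B : Set (Set Y), TopologicalSpace.IsTopologicalBasis B ∧ ∀ s ∈ B, s.OrdConnected)
    (a : Y) : IsOpen (Set.Iio a) := by
  obtain ⟨B, hBasis, hconv⟩ := hB
  rw [isOpen_iff_forall_mem_open]
  intro x hx
  obtain ⟨U, V, hU, hV, hxU, haV, hUV⟩ := t2_separation (ne_of_lt hx)
  obtain ⟨u, huB, hxu, huU⟩ := hBasis.exists_subset_of_mem_open hxU hU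
  obtain ⟨v, hvB, hav, hvV⟩ := hBasis.exists_subset_of_mem_open haV hV
  refine ⟨u, ?_, hBasis.isOpen huB, hxu⟩
  intro w hw
  by_contra hwa
  have : a ∈ u := (hconv u huB).out hxu hw ⟨le_of_lt hx, le_of_not_gt hwa⟩
  exact hUV.le_bot ⟨huU this, hvV hav⟩

/-- In a countably cellular GO-space, every lower set without a largest
element has a countable cofinal subset. -/
theorem lower_set_countable_cofinal {Y : Type*} [TopologicalSpace Y] [T2Space Y] [LinearOrder Y]
    (hB : ∃ B : Set (Set Y), TopologicalSpace.IsTopologicalBasis B ∧ ∀ s ∈ B, s.OrdConnected)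
    (hcc : ∀ 𝒞 : Set (Set Y), (∀ U ∈ 𝒞, IsOpen U ∧ U.Nonempty) →
      𝒞.PairwiseDisjoint id → 𝒞.Countable)
    (L : Set Y) (hlower : ∀ a ∈ L, ∀ y, y ≤ a → y ∈ L)
    (hnomax : ¬ ∃ m ∈ L, ∀ x ∈ L, x ≤ m) :
    ∃ C ⊆ L, C.Countable ∧ ∀ x ∈ L, ∃ c ∈ C, x ≤ c := by
  have hIooOpen : ∀ a b : Y, IsOpen (Set.Ioo a b) := by
    intro a b
    rw [← Set.Ioi_inter_Iio]
    exact (go_isOpen_Ioi hB a).inter (go_isOpen_Iio hB b)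
  -- any element of L is not maximal
  have hstep : ∀ x ∈ L, ∃ y ∈ L, x < y := by
    intro x hx
    by_contra h
    push_neg at h
    exact hnomax ⟨x, hx, fun z hz => le_of_not_gt fun hlt => absurd hlt (not_lt.mpr (h z hz))⟩
  -- the family of nonempty open intervals with endpoints in L
  set 𝒜 : Set (Set Y) := {S | ∃ a ∈ L, ∃ b ∈ L, S = Set.Ioo a b ∧ S.Nonempty} with h𝒜
  -- Zorn: maximal pairwise disjoint subfamily
  obtain ⟨𝒟, h𝒟, hmax⟩ : ∃ 𝒟, (𝒟 ⊆ 𝒜 ∧ 𝒟.PairwiseDisjoint id) ∧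
      ∀ F, (F ⊆ 𝒜 ∧ F.PairwiseDisjoint id) → 𝒟 ⊆ F → F = 𝒟 := by
    have hzorn : ∀ c ⊆ {F | F ⊆ 𝒜 ∧ F.PairwiseDisjoint id}, IsChain (· ⊆ ·) c →
        ∃ ub ∈ {F | F ⊆ 𝒜 ∧ F.PairwiseDisjoint id}, ∀ s ∈ c, s ⊆ ub := by
      intro c hc hchain
      refine ⟨⋃₀ c, ⟨?_, ?_⟩, fun s hs => subset_sUnion_of_mem hs⟩
      · intro S hS
        obtain ⟨F, hF, hSF⟩ := hS
        exact (hc hF).1 hSF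
      · intro x hx y hy hxy
        obtain ⟨F, hF, hxF⟩ := hx
        obtain ⟨G, hG, hyG⟩ := hy
        rcases hchain.total hF hG with h | h
        · exact (hc hG).2 (h hxF) hyG hxy
        · exact (hc hF).2 hxF (h hyG) hxy
    obtain ⟨𝒟, hmem, hmax⟩ := zorn_subset {F | F ⊆ 𝒜 ∧ F.PairwiseDisjoint id} hzorn
    exact ⟨𝒟, hmem, fun F hF hsub => le_antisymm (hmax hF hsub) hsub⟩
  obtain ⟨h𝒟A, h𝒟disj⟩ := h𝒟
  -- countability
  have h𝒟count : 𝒟.Countable := by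
    refine hcc 𝒟 (fun U hU => ?_) h𝒟disj
    obtain ⟨a, _, b, _, rfl, hne⟩ := h𝒟A hU
    exact ⟨hIooOpen a b, hne⟩
  -- pick right endpoints
  have hpick : ∀ D : 𝒟, ∃ b ∈ L, ∃ a, (D : Set Y) = Set.Ioo a b := by
    intro ⟨D, hD⟩
    obtain ⟨a, _, b, hb, rfl, _⟩ := h𝒟A hD
    exact ⟨b, hb, a, rfl⟩
  choose f hfL hf using hpick
  have := h𝒟count.to_subtype
  refine ⟨Set.range f, ?_, ?_, ?_⟩
  · rintro c ⟨D, rfl⟩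
    exact hfL D
  · exact Set.countable_range f
  · intro x hx
    by_contra hcontra
    push_neg at hcontra
    have hxabove : ∀ D : 𝒟, f D < x := fun D => hcontra (f D) ⟨D, rfl⟩
    obtain ⟨y, hy, hxy⟩ := hstep x hx
    obtain ⟨z, hz, hyz⟩ := hstep y hy
    set I : Set Y := Set.Ioo x z with hI
    have hIne : I.Nonempty := ⟨y, hxy, hyz⟩
    have hIA : I ∈ 𝒜 := ⟨x, hx, z, hz, rfl, hIne⟩
    have hIdisj : ∀ D ∈ 𝒟, Disjoint I D := by
      intro D hD
      obtain ⟨a, ha⟩ := hf ⟨D, hD⟩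
      rw [show D = Set.Ioo a (f ⟨D, hD⟩) from ha]
      refine Set.disjoint_left.mpr ?_
      rintro w ⟨hw1, _⟩ ⟨_, hw2⟩
      exact absurd (hw2.trans (hxabove ⟨D, hD⟩)) (not_lt.mpr (le_of_lt hw1))
    have hins : insert I 𝒟 = 𝒟 := by
      refine hmax (insert I 𝒟) ⟨?_, ?_⟩ (Set.subset_insert _ _)
      · exact Set.insert_subset hIA h𝒟A
      · exact h𝒟disj.insert fun D hD _ => hIdisj D hD
    have : I ∈ 𝒟 := hins ▸ Set.mem_insert I 𝒟
    obtain ⟨w, hw⟩ := hIne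
    exact Set.disjoint_left.mp (hIdisj I this) hw hw
end

section
/- Let Φ : X ⊸ Y be a minimal usco multimap from a countably cellular topological space X to a topological space Y. Then the image Φ[X] = ⋃_{x∈X} Φ(x) is a countably cellular subspace of Y. -/
/-- The image of a minimal usco multimap defined on a countably cellular
space is a countably cellular subspace of the codomain. -/
theorem minimal_usco_image_countably_cellular {X Y : Type*}
    [TopologicalSpace X] [TopologicalSpace Y]
    (hcc : ∀ 𝒞 : Set (Set X), (∀ U ∈ 𝒞, IsOpen U ∧ U.Nonempty) →
      𝒞.PairwiseDisjoint id → 𝒞.Countable)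
    (Φ : X → Set Y)
    (husc : ∀ F : Set Y, IsClosed F → IsClosed {x | (Φ x ∩ F).Nonempty})
    (hcomp : ∀ x, (Φ x).Nonempty ∧ IsCompact (Φ x))
    (hmin : ∀ Ψ : X → Set Y,
      (∀ F : Set Y, IsClosed F → IsClosed {x | (Ψ x ∩ F).Nonempty}) →
      (∀ x, (Ψ x).Nonempty ∧ IsCompact (Ψ x)) →
      (∀ x, Ψ x ⊆ Φ x) → ∀ x, Ψ x = Φ x) :
    ∀ 𝒞 : Set (Set (⋃ x, Φ x : Set Y)), (∀ U ∈ 𝒞, IsOpen U ∧ U.Nonempty) →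
      𝒞.PairwiseDisjoint id → 𝒞.Countable := by
  -- Key property of minimal usco maps
  have key : ∀ U : Set Y, IsOpen U → (∃ x, (Φ x ∩ U).Nonempty) →
      ∃ V : Set X, IsOpen V ∧ V.Nonempty ∧ ∀ x ∈ V, Φ x ⊆ U := by
    intro U hU ⟨x₀, hx₀⟩
    have hFclosed : IsClosed Uᶜ := hU.isClosed_compl
    by_cases hC : {x | (Φ x ∩ Uᶜ).Nonempty} = Set.univ
    · exfalso
      set Ψ : X → Set Y := fun x => Φ x ∩ Uᶜ with hΨ
      have husc' : ∀ F : Set Y, IsClosed F → IsClosed {x | (Ψ x ∩ F).Nonempty} := by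
        intro F hF
        have : {x | (Ψ x ∩ F).Nonempty} = {x | (Φ x ∩ (Uᶜ ∩ F)).Nonempty} := by
          simp [hΨ, Set.inter_assoc]
        rw [this]
        exact husc _ (hFclosed.inter hF)
      have hcomp' : ∀ x, (Ψ x).Nonempty ∧ IsCompact (Ψ x) := by
        intro x
        refine ⟨?_, (hcomp x).2.inter_right hFclosed⟩
        have : x ∈ {x | (Φ x ∩ Uᶜ).Nonempty} := hC ▸ Set.mem_univ x
        exact this
      have := hmin Ψ husc' hcomp' (fun x => Set.inter_subset_left) x₀
      obtain ⟨y, hyΦ, hyU⟩ := hx₀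
      have : y ∈ Ψ x₀ := this ▸ hyΦ
      exact this.2 hyU
    · refine ⟨{x | (Φ x ∩ Uᶜ).Nonempty}ᶜ, (husc _ hFclosed).isOpen_compl, ?_, ?_⟩
      · rcases Set.nonempty_compl.2 hC with ⟨x, hx⟩
        exact ⟨x, hx⟩
      · intro x hx y hy
        by_contra hyU
        exact hx ⟨y, hy, hyU⟩
  intro 𝒞 hop hdisj
  -- choose for each U ∈ 𝒞 a nonempty open V ⊆ X with Φ[V] ⊆ U
  have h1 : ∀ U : Set (⋃ x, Φ x : Set Y), ∃ V : Set X, U ∈ 𝒞 →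
      IsOpen V ∧ V.Nonempty ∧ ∀ x ∈ V, ∀ y, ∀ hy : y ∈ Φ x,
        (⟨y, Set.mem_iUnion.2 ⟨x, hy⟩⟩ : (⋃ x, Φ x : Set Y)) ∈ U := by
    intro U
    by_cases hU : U ∈ 𝒞
    · obtain ⟨hUo, hUne⟩ := hop U hU
      obtain ⟨U', hU'o, hU'eq⟩ := isOpen_induced_iff.1 hUo
      obtain ⟨⟨y, hy⟩, hyU⟩ := hUne
      obtain ⟨x, hx⟩ := Set.mem_iUnion.1 hy
      have hyU' : y ∈ U' := by
        have := hU'eq ▸ hyU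
        exact this
      obtain ⟨V, hVo, hVne, hVsub⟩ := key U' hU'o ⟨x, y, hx, hyU'⟩
      refine ⟨V, fun _ => ⟨hVo, hVne, ?_⟩⟩
      intro x hxV y hyΦ
      have : y ∈ U' := hVsub x hxV hyΦ
      rw [← hU'eq]
      exact this
    · exact ⟨∅, fun h => absurd h hU⟩
  choose f hf using h1
  -- cross disjointness
  have cross : ∀ U ∈ 𝒞, ∀ W ∈ 𝒞, U ≠ W → ∀ x, x ∈ f U → x ∉ f W := by
    intro U hU W hW hne x hxU hxW
    obtain ⟨y, hy⟩ := (hcomp x).1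
    have h1 : (⟨y, Set.mem_iUnion.2 ⟨x, hy⟩⟩ : (⋃ x, Φ x : Set Y)) ∈ U :=
      (hf U hU).2.2 x hxU y hy
    have h2 : (⟨y, Set.mem_iUnion.2 ⟨x, hy⟩⟩ : (⋃ x, Φ x : Set Y)) ∈ W :=
      (hf W hW).2.2 x hxW y hy
    exact Set.disjoint_left.1 (hdisj hU hW hne) h1 h2
  have hinj : Set.InjOn f 𝒞 := by
    intro U hU W hW heq
    by_contra hne
    obtain ⟨x, hx⟩ := (hf U hU).2.1
    exact cross U hU W hW hne x hx (heq ▸ hx)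
  refine Set.countable_of_injective_of_countable_image hinj (hcc (f '' 𝒞) ?_ ?_)
  · rintro V ⟨U, hU, rfl⟩
    exact ⟨(hf U hU).1, (hf U hU).2.1⟩
  · rintro V ⟨U, hU, rfl⟩ V' ⟨W, hW, rfl⟩ hne
    have hUW : U ≠ W := fun h => hne (h ▸ rfl)
    exact Set.disjoint_left.2 fun x hx => cross U hU W hW hUW x hx
end

section
/- The split interval is hereditarily Lindelöf: every subspace of [0,1] × {0,1} with the lexicographic order topology is Lindelöf. -/
/-- The split interval: `[0,1] × {0,1}` with the lexicographic order. -/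
abbrev SplitInterval : Type := Set.Icc (0:ℝ) 1 ×ₗ Bool

instance : TopologicalSpace SplitInterval := Preorder.topology SplitInterval

instance : OrderTopology SplitInterval := ⟨rfl⟩

namespace SI
noncomputable def xc (p : SplitInterval) : ℝ := ((ofLex p).1 : ℝ)

lemma lt_iff {p q : SplitInterval} :
    p < q ↔ xc p < xc q ∨ (xc p = xc q ∧ (ofLex p).2 < (ofLex q).2) := by
  rw [show p = toLex (ofLex p) from rfl, show q = toLex (ofLex q) from rfl, Prod.Lex.lt_iff]
  simp [xc, Subtype.coe_lt_coe, Subtype.coe_inj]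

lemma ext {p q : SplitInterval} (h1 : xc p = xc q) (h2 : (ofLex p).2 = (ofLex q).2) : p = q := by
  have : ofLex p = ofLex q := Prod.ext (Subtype.coe_injective h1) h2
  exact ofLex_inj.mp this

lemma nhds_false (p : SplitInterval) (hb : (ofLex p).2 = false) {s : Set SplitInterval}
    (hs : s ∈ nhds p) : ∃ a : ℝ, a < xc p ∧ ∀ q, a < xc q → xc q < xc p → q ∈ s := by
  by_cases h : ∃ l, l < p
  · obtain ⟨l, hl, hsub⟩ := exists_Ioc_subset_of_mem_nhds hs h
    have hlx : xc l < xc p := by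
      rcases lt_iff.mp hl with h' | ⟨_, h'⟩
      · exact h'
      · rw [hb] at h'; exact absurd h' (by simp)
    exact ⟨xc l, hlx, fun q hq1 hq2 => hsub ⟨lt_iff.mpr (Or.inl hq1), le_of_lt (lt_iff.mpr (Or.inl hq2))⟩⟩
  · refine ⟨xc p - 1, by linarith, fun q hq1 hq2 => absurd ⟨q, lt_iff.mpr (Or.inl hq2)⟩ h⟩

lemma nhds_true (p : SplitInterval) (hb : (ofLex p).2 = true) {s : Set SplitInterval}
    (hs : s ∈ nhds p) : ∃ a : ℝ, xc p < a ∧ ∀ q, xc p < xc q → xc q < a → q ∈ s := by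
  by_cases h : ∃ u, p < u
  · obtain ⟨u, hu, hsub⟩ := exists_Ico_subset_of_mem_nhds hs h
    have hux : xc p < xc u := by
      rcases lt_iff.mp hu with h' | ⟨_, h'⟩
      · exact h'
      · rw [hb] at h'; exact absurd h' (by simp)
    exact ⟨xc u, hux, fun q hq1 hq2 => hsub ⟨le_of_lt (lt_iff.mpr (Or.inl hq1)), lt_iff.mpr (Or.inl hq2)⟩⟩
  · refine ⟨xc p + 1, by linarith, fun q hq1 hq2 => absurd ⟨q, lt_iff.mpr (Or.inl hq1)⟩ h⟩

end SI


open Set in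
/-- The split interval is hereditarily Lindelöf. -/
theorem splitInterval_hereditarilyLindelof : HereditarilyLindelofSpace SplitInterval := by
  refine ⟨fun t _ => ?_⟩
  rw [isLindelof_iff_countable_subcover]
  intro ι U hUo hcov
  classical
  rcases t.eq_empty_or_nonempty with rfl | ⟨p0, hp0⟩
  · exact ⟨∅, countable_empty, by simp⟩
  have : Nonempty ι := ⟨(mem_iUnion.mp (hcov hp0)).choose⟩
  -- choose for each point an index and a one-sided real interval inside its chart
  have key : ∀ p, p ∈ t → ∃ (i : ι) (a : ℝ), p ∈ U i ∧
      ((ofLex p).2 = false → a < SI.xc p ∧ ∀ q, SI.xc q ∈ Ioo a (SI.xc p) → q ∈ U i) ∧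
      ((ofLex p).2 = true → SI.xc p < a ∧ ∀ q, SI.xc q ∈ Ioo (SI.xc p) a → q ∈ U i) := by
    intro p hp
    obtain ⟨i, hi⟩ := mem_iUnion.mp (hcov hp)
    have hnh : U i ∈ nhds p := (hUo i).mem_nhds hi
    cases hbp : (ofLex p).2 with
    | false =>
        obtain ⟨a, ha, hsub⟩ := SI.nhds_false p hbp hnh
        exact ⟨i, a, hi, fun _ => ⟨ha, fun q hq => hsub q hq.1 hq.2⟩, fun h => by simp [hbp] at h⟩
    | true =>
        obtain ⟨a, ha, hsub⟩ := SI.nhds_true p hbp hnh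
        exact ⟨i, a, hi, fun h => by simp [hbp] at h, fun _ => ⟨ha, fun q hq => hsub q hq.1 hq.2⟩⟩
  choose! i a hpU hF hT using key
  -- the real open interval attached to each point
  set W : SplitInterval → Set ℝ :=
    fun p => if (ofLex p).2 = true then Ioo (SI.xc p) (a p) else Ioo (a p) (SI.xc p) with hW
  have hWopen : ∀ p : t, IsOpen (W ↑p) := by
    intro p; rw [hW]; dsimp only; split_ifs <;> exact isOpen_Ioo
  have hWsub : ∀ p, p ∈ t → ∀ q, SI.xc q ∈ W p → q ∈ U (i p) := by
    intro p hp q hq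
    rw [hW] at hq; dsimp only at hq
    split_ifs at hq with h
    · exact (hT p hp h).2 q hq
    · exact (hF p hp (by simpa using h)).2 q hq
  set V : Set ℝ := ⋃ p : t, W ↑p with hV
  have hWV : ∀ p, p ∈ t → ∀ y ∈ W p, y ∈ V := fun p hp y hy =>
    mem_iUnion.mpr ⟨⟨p, hp⟩, hy⟩
  obtain ⟨c, hcc, hceq⟩ := eq_open_union_countable (fun p : t => W ↑p) hWopen
  -- residual set of points whose x-coordinate is not in V
  set R : Set SplitInterval := {q | q ∈ t ∧ SI.xc q ∉ V} with hR
  have hWne : ∀ q ∈ R, ∃ rt : ℚ, (rt : ℝ) ∈ W q := by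
    intro q hq
    rw [hW]; dsimp only
    split_ifs with h
    · obtain ⟨rt, hr1, hr2⟩ := exists_rat_btwn (hT q hq.1 h).1
      exact ⟨rt, hr1, hr2⟩
    · obtain ⟨rt, hr1, hr2⟩ := exists_rat_btwn (hF q hq.1 (by simpa using h)).1
      exact ⟨rt, hr1, hr2⟩
  choose! r hr using hWne
  -- R is countable: q ↦ (r q, bool q) is injective on R
  have hRc : R.Countable := by
    have hinj : Set.InjOn (fun q => (r q, (ofLex q).2)) R := by
      intro q₁ hq₁ q₂ hq₂ heq
      have heq' : (r q₁, (ofLex q₁).2) = (r q₂, (ofLex q₂).2) := heq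
      obtain ⟨hrq, hb⟩ := Prod.ext_iff.mp heq'
      have hrr : (r q₁ : ℝ) = (r q₂ : ℝ) := by exact_mod_cast hrq
      by_contra hne
      have hxne : SI.xc q₁ ≠ SI.xc q₂ := fun h => hne (SI.ext h hb)
      have main : ∀ p₁ p₂, p₁ ∈ R → p₂ ∈ R → (ofLex p₁).2 = (ofLex p₂).2 →
          (r p₁ : ℝ) = (r p₂ : ℝ) → SI.xc p₁ < SI.xc p₂ → False := by
        intro p₁ p₂ hp₁ hp₂ hb' hrr' hlt
        have h₁ := hr p₁ hp₁
        have h₂ := hr p₂ hp₂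
        cases hbc : (ofLex p₁).2 with
        | true =>
            have e₁ : W p₁ = Ioo (SI.xc p₁) (a p₁) := by simp [hW, hbc]
            have e₂ : W p₂ = Ioo (SI.xc p₂) (a p₂) := by simp [hW, ← hb', hbc]
            rw [e₁] at h₁; rw [e₂] at h₂
            refine hp₂.2 (hWV p₁ hp₁.1 _ ?_)
            rw [e₁]
            exact ⟨hlt, lt_trans (hrr' ▸ h₂.1) h₁.2⟩
        | false =>
            have e₁ : W p₁ = Ioo (a p₁) (SI.xc p₁) := by simp [hW, hbc]
            have e₂ : W p₂ = Ioo (a p₂) (SI.xc p₂) := by simp [hW, ← hb', hbc]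
            rw [e₁] at h₁; rw [e₂] at h₂
            refine hp₁.2 (hWV p₂ hp₂.1 _ ?_)
            rw [e₂]
            exact ⟨lt_trans (hrr' ▸ h₂.1) h₁.2, hlt⟩
      rcases lt_or_gt_of_ne hxne with h | h
      · exact main q₁ q₂ hq₁ hq₂ hb hrr h
      · exact main q₂ q₁ hq₂ hq₁ hb.symm hrr.symm h
    exact Set.countable_of_injective_of_countable_image hinj
      ((Set.countable_univ (α := ℚ × Bool)).mono (Set.subset_univ _))
  -- final countable subcover
  refine ⟨i '' ((Subtype.val '' c) ∪ R), ((hcc.image Subtype.val).union hRc).image i, ?_⟩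
  intro q hq
  by_cases hqV : SI.xc q ∈ V
  · rw [hV, ← hceq, mem_iUnion₂] at hqV
    obtain ⟨p, hpc, hqp⟩ := hqV
    rw [mem_iUnion₂]
    exact ⟨i ↑p, ⟨↑p, Or.inl ⟨p, hpc, rfl⟩, rfl⟩, hWsub ↑p p.2 q hqp⟩
  · have hqR : q ∈ R := ⟨hq, hqV⟩
    rw [mem_iUnion₂]
    exact ⟨i q, ⟨q, Or.inr hqR, rfl⟩, hpU q hq⟩
end

section
/- Let p : Ï → [0,1] be the projection ⟨x,i⟩ ↦ x from the split interval onto the unit interval. Then every selection s : [0,1] → Ï of the multimap p⁻¹ (i.e., every function s with p(s(x)) = x for all x) is F_σ-measurable. -/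
/-- The projection `⟨x,i⟩ ↦ x` of the split interval onto the unit interval. -/
def splitProj : SplitInterval → Set.Icc (0:ℝ) 1 := fun a => (ofLex a).1

/-- A set is `Fσ` if it is a countable union of closed sets. -/
def IsFsigma {X : Type*} [TopologicalSpace X] (s : Set X) : Prop :=
  ∃ F : ℕ → Set X, (∀ n, IsClosed (F n)) ∧ s = ⋃ n, F n

/-! A selection `s` of `splitProj⁻¹` is strictly monotone, and it is continuous from the left at
every `x` with `s x = (x, 0)` and from the right at every `x` with `s x = (x, 1)`. So `E = s⁻¹ U`
is a one-sided neighbourhood of each of its points, and every point of `E \ interior E` is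
isolated from one side in the complement of `interior E`; there are only countably many such
points in `[0,1]`. Thus `E` is an open set plus a countable set, and both are `Fσ` in `[0,1]`. -/

open Set Filter Topology

lemma isFsigma_iff_isGδ_compl {X : Type*} [TopologicalSpace X] {s : Set X} :
    IsFsigma s ↔ IsGδ sᶜ := by
  rw [isGδ_iff_eq_iInter_nat]
  constructor
  · rintro ⟨F, hF, rfl⟩
    exact ⟨fun n => (F n)ᶜ, fun n => (hF n).isOpen_compl, compl_iUnion F⟩
  · rintro ⟨G, hG, hsG⟩
    refine ⟨fun n => (G n)ᶜ, fun n => (hG n).isClosed_compl, ?_⟩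
    rw [← compl_iInter, ← hsG, compl_compl]

lemma IsFsigma.union {X : Type*} [TopologicalSpace X] {s t : Set X}
    (hs : IsFsigma s) (ht : IsFsigma t) : IsFsigma (s ∪ t) := by
  rw [isFsigma_iff_isGδ_compl, compl_union] at *
  exact hs.inter ht

lemma IsOpen.isFsigma {X : Type*} [TopologicalSpace X] [PerfectlyNormalSpace X] {s : Set X}
    (hs : IsOpen s) : IsFsigma s :=
  isFsigma_iff_isGδ_compl.2 hs.isClosed_compl.isGδ

lemma Set.Countable.isFsigma {X : Type*} [TopologicalSpace X] [T1Space X] {s : Set X}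
    (hs : s.Countable) : IsFsigma s :=
  isFsigma_iff_isGδ_compl.2 hs.isGδ_compl

lemma isFsigma_of_countable_diff_interior {X : Type*} [TopologicalSpace X]
    [PerfectlyNormalSpace X] [T1Space X] {s : Set X} (hs : (s \ interior s).Countable) :
    IsFsigma s := by
  rw [← union_sdiff_cancel (interior_subset (s := s))]
  exact isOpen_interior.isFsigma.union hs.isFsigma

section LinearOrder

variable {α : Type*} [TopologicalSpace α] [LinearOrder α] [OrderTopology α] {s : Set α} {x : α}

lemma interior_mem_nhdsLT_of_mem_nhdsLE (h : s ∈ 𝓝[≤] x) : interior s ∈ 𝓝[<] x := by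
  obtain ⟨u, hu, hxu, hus⟩ := mem_nhdsWithin.1 h
  refine mem_of_superset (inter_mem_nhdsWithin _ (hu.mem_nhds hxu)) ?_
  exact interior_maximal (fun y hy => hus ⟨hy.2, le_of_lt hy.1⟩) (isOpen_Iio.inter hu)

lemma interior_mem_nhdsGT_of_mem_nhdsGE (h : s ∈ 𝓝[≥] x) : interior s ∈ 𝓝[>] x :=
  interior_mem_nhdsLT_of_mem_nhdsLE (α := αᵒᵈ) h

lemma countable_diff_interior_of_forall_mem_nhdsLE_or_nhdsGE [SecondCountableTopology α]
    (h : ∀ x ∈ s, s ∈ 𝓝[≤] x ∨ s ∈ 𝓝[≥] x) : (s \ interior s).Countable := by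
  refine (countable_setOfPred_isolated_left_within (s := (interior s)ᶜ)).union
    (countable_setOfPred_isolated_right_within (s := (interior s)ᶜ)) |>.mono ?_
  rintro x ⟨hxs, hxi⟩
  rcases h x hxs with hx | hx
  · refine Or.inl ⟨hxi, ?_⟩
    rw [inter_comm, nhdsWithin_inter', inf_principal_eq_bot, compl_compl]
    exact interior_mem_nhdsLT_of_mem_nhdsLE hx
  · refine Or.inr ⟨hxi, ?_⟩
    rw [inter_comm, nhdsWithin_inter', inf_principal_eq_bot, compl_compl]
    exact interior_mem_nhdsGT_of_mem_nhdsGE hx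

end LinearOrder

namespace SplitInterval

variable {a b : SplitInterval}

lemma lt_of_splitProj_lt (h : splitProj a < splitProj b) : a < b :=
  Prod.Lex.lt_iff.2 (Or.inl h)

lemma splitProj_lt_of_lt_of_snd_eq_false (hab : a < b) (hb : (ofLex b).2 = false) :
    splitProj a < splitProj b := by
  rcases Prod.Lex.lt_iff.1 hab with h | ⟨-, h⟩
  · exact h
  · simp [hb, Bool.lt_iff] at h

lemma splitProj_lt_of_lt_of_snd_eq_true (hab : a < b) (ha : (ofLex a).2 = true) :
    splitProj a < splitProj b := by
  rcases Prod.Lex.lt_iff.1 hab with h | ⟨-, h⟩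
  · exact h
  · simp [ha, Bool.lt_iff] at h

variable {s : Icc (0:ℝ) 1 → SplitInterval} {x : Icc (0:ℝ) 1}

lemma strictMono_of_leftInverse_splitProj (hs : Function.LeftInverse splitProj s) : StrictMono s :=
  fun x y hxy => lt_of_splitProj_lt (by rwa [hs x, hs y])

lemma continuousWithinAt_Iic_of_snd_eq_false (hs : Function.LeftInverse splitProj s)
    (hx : (ofLex (s x)).2 = false) : ContinuousWithinAt s (Iic x) x := by
  refine tendsto_order.2 ⟨fun a ha => ?_, fun b hb => ?_⟩
  · have hax : splitProj a < x := hs x ▸ splitProj_lt_of_lt_of_snd_eq_false ha hx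
    filter_upwards [nhdsWithin_le_nhds (Ioi_mem_nhds hax)] with y hy
    exact lt_of_splitProj_lt (by rwa [hs y])
  · filter_upwards [self_mem_nhdsWithin] with y hy
    exact ((strictMono_of_leftInverse_splitProj hs).monotone hy).trans_lt hb

lemma continuousWithinAt_Ici_of_snd_eq_true (hs : Function.LeftInverse splitProj s)
    (hx : (ofLex (s x)).2 = true) : ContinuousWithinAt s (Ici x) x := by
  refine tendsto_order.2 ⟨fun a ha => ?_, fun b hb => ?_⟩
  · filter_upwards [self_mem_nhdsWithin] with y hy
    exact ha.trans_le ((strictMono_of_leftInverse_splitProj hs).monotone hy)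
  · have hxb : x < splitProj b := hs x ▸ splitProj_lt_of_lt_of_snd_eq_true hb hx
    filter_upwards [nhdsWithin_le_nhds (Iio_mem_nhds hxb)] with y hy
    exact lt_of_splitProj_lt (by rwa [hs y])

lemma preimage_mem_nhdsLE_or_nhdsGE (hs : Function.LeftInverse splitProj s)
    {U : Set SplitInterval} (hU : U ∈ 𝓝 (s x)) :
    s ⁻¹' U ∈ 𝓝[≤] x ∨ s ⁻¹' U ∈ 𝓝[≥] x := by
  cases hx : (ofLex (s x)).2
  · exact Or.inl ((continuousWithinAt_Iic_of_snd_eq_false hs hx).preimage_mem_nhdsWithin hU)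
  · exact Or.inr ((continuousWithinAt_Ici_of_snd_eq_true hs hx).preimage_mem_nhdsWithin hU)

end SplitInterval

/-- Every selection of the multimap `p⁻¹ : [0,1] ⊸ Ï` is Fσ-measurable. -/
theorem selection_of_splitProj_inv_Fsigma_measurable
    (s : Set.Icc (0:ℝ) 1 → SplitInterval) (hs : ∀ x, splitProj (s x) = x) :
    ∀ U : Set SplitInterval, IsOpen U → IsFsigma (s ⁻¹' U) := by
  intro U hU
  refine isFsigma_of_countable_diff_interior
    (countable_diff_interior_of_forall_mem_nhdsLE_or_nhdsGE fun x hx => ?_)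
  exact SplitInterval.preimage_mem_nhdsLE_or_nhdsGE hs (hU.mem_nhds hx)
end

section
/- Assume s : [0,1]² → Ï² is a Borel-measurable selection of P⁻¹, where P : Ï² → [0,1]² is the square of the projection p : Ï → [0,1]. For i,j ∈ {0,1} let Z_{ij} = {z ∈ [0,1]² : s(z) ∈ Ï_i × Ï_j}, where Ï_k = [0,1] × {k}. Then for every a ∈ ℝ, the intersection of the anti-diagonal line L_a = {⟨x,y⟩ : x + y = a} with Z_{00} is at most countable. -/
/-- The square `P = p × p` of the projection `p`. -/
def splitProjSq : SplitInterval × SplitInterval → Set.Icc (0:ℝ) 1 × Set.Icc (0:ℝ) 1 :=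
  fun z => (splitProj z.1, splitProj z.2)

/-!
For `z ∈ Z₀₀` the lower set `Iic (s z)` is open in `Ï²`, because `Iic ⟨x,0⟩ = Iio ⟨x,1⟩` in the
split interval. Since `P` is monotone and `P ∘ s = id`, `s w ≤ s z` forces `w ≤ z`, and on the
antidiagonal `L_a` this forces `w = z`. Hence every `A ⊆ L_a ∩ Z₀₀` equals
`L_a ∩ s⁻¹(⋃ w ∈ A, Iic (s w))` and is Borel. An uncountable Borel set in a standard Borel space
is Borel isomorphic to the Cantor space, which has `2^𝔠` subsets but only `𝔠` Borel subsets,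
so a Borel set all of whose subsets are Borel is countable.
-/

open Set

theorem Prod.Lex.Iic_toLex_false_eq_Iio_toLex_true {α : Type*} [Preorder α] (x : α) :
    Iic (toLex (x, false)) = Iio (toLex (x, true)) := by
  have hBool : ∀ b : Bool, b ≤ false ↔ b < true := by decide
  ext y
  simp only [mem_Iic, mem_Iio, Prod.Lex.le_iff, Prod.Lex.lt_iff, ofLex_toLex, hBool]

theorem SplitInterval.isOpen_Iic {x : SplitInterval} (hx : (ofLex x).2 = false) :
    IsOpen (Iic x) := by
  have hx' : x = toLex ((ofLex x).1, false) := by rw [← hx]; rfl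
  rw [hx', Prod.Lex.Iic_toLex_false_eq_Iio_toLex_true]
  exact isOpen_Iio

theorem monotone_splitProjSq : Monotone splitProjSq :=
  fun _ _ h => Prod.mk_le_mk.mpr ⟨Prod.Lex.monotone_fst _ _ h.1, Prod.Lex.monotone_fst _ _ h.2⟩

def antidiagonalLine (a : ℝ) : Set (Icc (0:ℝ) 1 × Icc (0:ℝ) 1) :=
  {z | (z.1 : ℝ) + (z.2 : ℝ) = a}

theorem measurableSet_antidiagonalLine (a : ℝ) : MeasurableSet (antidiagonalLine a) :=
  (measurable_subtype_coe.comp measurable_fst).add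
    (measurable_subtype_coe.comp measurable_snd) (measurableSet_singleton a)

theorem isAntichain_antidiagonalLine (a : ℝ) : IsAntichain (· ≤ ·) (antidiagonalLine a) := by
  intro z hz w hw hne hle
  have h := (add_eq_add_iff_eq_and_eq (α := ℝ) hle.1 hle.2).mp (hz.trans hw.symm)
  exact hne (Prod.ext (Subtype.ext h.1) (Subtype.ext h.2))

theorem preimage_biUnion_Iic_inter_eq {X Y : Type*} [Preorder X] [Preorder Y]
    {s : X → Y} {P : Y → X} (hPs : Function.LeftInverse P s) (hP : Monotone P)
    {L A : Set X} (hL : IsAntichain (· ≤ ·) L) (hA : A ⊆ L) :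
    s ⁻¹' (⋃ w ∈ A, Iic (s w)) ∩ L = A := by
  refine Subset.antisymm ?_ fun z hz => ⟨mem_biUnion hz le_rfl, hA hz⟩
  rintro z ⟨hz, hzL⟩
  obtain ⟨w, hw, hzw⟩ := mem_iUnion₂.mp hz
  have hle : z ≤ w := by simpa only [hPs z, hPs w] using hP hzw
  rwa [hL.eq hzL (hA hw) hle]

def Z00 (s : Icc (0:ℝ) 1 × Icc (0:ℝ) 1 → SplitInterval × SplitInterval) :
    Set (Icc (0:ℝ) 1 × Icc (0:ℝ) 1) :=
  {z | (ofLex (s z).1).2 = false ∧ (ofLex (s z).2).2 = false}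

theorem measurableSet_of_subset_antidiagonalLine_inter_Z00
    {s : Icc (0:ℝ) 1 × Icc (0:ℝ) 1 → SplitInterval × SplitInterval}
    (hsel : ∀ z, splitProjSq (s z) = z)
    (hBorel : ∀ U : Set (SplitInterval × SplitInterval), IsOpen U → MeasurableSet (s ⁻¹' U))
    {a : ℝ} {A : Set (Icc (0:ℝ) 1 × Icc (0:ℝ) 1)} (hA : A ⊆ antidiagonalLine a ∩ Z00 s) :
    MeasurableSet A := by
  have hopen : IsOpen (⋃ w ∈ A, Iic (s w)) := isOpen_biUnion fun w hw => by
    rw [← Iic_prod_Iic]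
    exact (SplitInterval.isOpen_Iic (hA hw).2.1).prod (SplitInterval.isOpen_Iic (hA hw).2.2)
  rw [← preimage_biUnion_Iic_inter_eq hsel monotone_splitProjSq (isAntichain_antidiagonalLine a)
    fun _ hz => (hA hz).1]
  exact (hBorel _ hopen).inter (measurableSet_antidiagonalLine a)

theorem exists_not_measurableSet_natBool : ∃ S : Set (ℕ → Bool), ¬MeasurableSet S := by
  by_contra! hall
  obtain ⟨b, hb, hgen⟩ := MeasurableSpace.CountablyGenerated.isCountablyGenerated (α := ℕ → Bool)
  have hle : (2 : Cardinal) ^ Cardinal.continuum ≤ Cardinal.continuum := calc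
    (2 : Cardinal) ^ Cardinal.continuum = Cardinal.mk (Set (ℕ → Bool)) := by simp
    _ = Cardinal.mk {t : Set (ℕ → Bool) | MeasurableSet t} := by simp only [hall, ofPred_true,
      Cardinal.mk_univ]
    _ ≤ Cardinal.continuum := hgen ▸ MeasurableSpace.cardinal_measurableSet_le_continuum
      (hb.le_aleph0.trans Cardinal.aleph0_le_continuum)
  exact (Cardinal.cantor _).not_ge hle

theorem Set.countable_of_forall_subset_measurableSet {α : Type*} [MeasurableSpace α]
    [StandardBorelSpace α] {E : Set α} (hE : ∀ A ⊆ E, MeasurableSet A) : E.Countable := by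
  by_contra hnc
  have : StandardBorelSpace E := (hE E subset_rfl).standardBorel
  let e : (ℕ → Bool) ≃ᵐ E :=
    (PolishSpace.measurableEquivNatBoolOfNotCountable (countable_coe_iff.not.mpr hnc)).symm
  obtain ⟨S, hS⟩ := exists_not_measurableSet_natBool
  have hinj : Function.Injective (Subtype.val ∘ e) := Subtype.val_injective.comp e.injective
  apply hS
  rw [← hinj.preimage_image S]
  exact (measurable_subtype_coe.comp e.measurable)
    (hE _ (by rw [image_comp]; exact Subtype.coe_image_subset _ _))

/-- If `s` is a Borel-measurable selection of `P⁻¹`, then for every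
`a ∈ ℝ` the intersection of the line `x + y = a` with
`Z₀₀ = {z : s(z) ∈ Ï₀ × Ï₀}` is at most countable. -/
theorem line_inter_Z00_countable
    (s : Set.Icc (0:ℝ) 1 × Set.Icc (0:ℝ) 1 → SplitInterval × SplitInterval)
    (hsel : ∀ z, splitProjSq (s z) = z)
    (hBorel : ∀ U : Set (SplitInterval × SplitInterval), IsOpen U → MeasurableSet (s ⁻¹' U))
    (a : ℝ) :
    Set.Countable {z : Set.Icc (0:ℝ) 1 × Set.Icc (0:ℝ) 1 |
      (z.1 : ℝ) + (z.2 : ℝ) = a ∧ (ofLex (s z).1).2 = false ∧ (ofLex (s z).2).2 = false} :=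
  Set.countable_of_forall_subset_measurableSet fun _ hA =>
    measurableSet_of_subset_antidiagonalLine_inter_Z00 hsel hBorel hA
end

section
/- Assume s : [0,1]² → Ï² is a Borel-measurable selection of P⁻¹ (P the square of the projection p : Ï → [0,1]), and let Z_{01} ∪ Z_{10} be the set of z with s(z) ∈ (Ï_0 × Ï_1) ∪ (Ï_1 × Ï_0). Then for every b ∈ ℝ, the intersection of the diagonal line Γ^b = {⟨x,y⟩ : y − x = b} with Z_{01} ∪ Z_{10} is at most countable. -/
open Cardinal Set

namespace MeasurableSpace

variable {X : Type*} [MeasurableSpace X]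

theorem cardinal_measurableSet_le_continuum_of_countablyGenerated [CountablyGenerated X] :
    #{t : Set X // MeasurableSet t} ≤ 𝔠 := by
  obtain ⟨g, hg, rfl⟩ := CountablyGenerated.isCountablyGenerated (α := X)
  exact cardinal_measurableSet_le_continuum (hg.le_aleph0.trans aleph0_le_continuum)

theorem mk_eq_continuum_of_not_countable [StandardBorelSpace X] (h : ¬Countable X) :
    #X = 𝔠 := by
  simpa [mk_arrow, two_power_aleph0] using
    lift_mk_eq'.mpr ⟨(PolishSpace.measurableEquivNatBoolOfNotCountable h).toEquiv⟩

theorem countable_of_forall_subset_measurableSet [StandardBorelSpace X] {A : Set X}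
    (hA : ∀ S ⊆ A, MeasurableSet S) : A.Countable := by
  by_contra hAnc
  have : StandardBorelSpace A := (hA A Subset.rfl).standardBorel
  have hcard : #A = 𝔠 := mk_eq_continuum_of_not_countable (by rwa [countable_coe_iff])
  let img : Set A → {t : Set X // MeasurableSet t} := fun S =>
    ⟨Subtype.val '' S, hA _ (Subtype.coe_image_subset A S)⟩
  have himg : Function.Injective img := fun S T h =>
    Subtype.val_injective.image_injective (congrArg Subtype.val h)
  have : 2 ^ 𝔠 ≤ 𝔠 := calc
    2 ^ 𝔠 = 2 ^ #A := by rw [hcard]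
    _ = #(Set A) := (mk_set).symm
    _ ≤ #{t : Set X // MeasurableSet t} := mk_le_of_injective himg
    _ ≤ 𝔠 := cardinal_measurableSet_le_continuum_of_countablyGenerated
  exact (cantor 𝔠).not_ge this

end MeasurableSpace

theorem measurableSet_of_forall_isolated {X Y : Type*} [MeasurableSpace X] [TopologicalSpace Y]
    {s : X → Y} (hs : ∀ U, IsOpen U → MeasurableSet (s ⁻¹' U)) {L S : Set X}
    (hL : MeasurableSet L) (hSL : S ⊆ L)
    (hiso : ∀ z ∈ S, ∃ U, IsOpen U ∧ s z ∈ U ∧ s ⁻¹' U ∩ L ⊆ {z}) :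
    MeasurableSet S := by
  choose! U hU hzU hUL using hiso
  suffices S = s ⁻¹' (⋃ z ∈ S, U z) ∩ L by
    rw [this]
    exact (hs _ (isOpen_biUnion fun z hz => hU z hz)).inter hL
  refine Subset.antisymm (fun z hz => ⟨mem_biUnion hz (hzU z hz), hSL hz⟩) ?_
  rintro w ⟨hw, hwL⟩
  obtain ⟨z, hz, hwz⟩ := mem_iUnion₂.mp hw
  rwa [hUL z hz ⟨hwz, hwL⟩]

namespace Prod.Lex

variable {α : Type*} [Preorder α] [TopologicalSpace (α ×ₗ Bool)] [OrderTopology (α ×ₗ Bool)]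

theorem exists_isOpen_fst_le_of_snd_eq_false {a : α ×ₗ Bool} (ha : (ofLex a).2 = false) :
    ∃ U, IsOpen U ∧ a ∈ U ∧ ∀ c ∈ U, (ofLex c).1 ≤ (ofLex a).1 := by
  let t := toLex ((ofLex a).1, true)
  refine ⟨Iio t, isOpen_Iio' t, ?_, fun c hc => monotone_fst c t (le_of_lt hc)⟩
  exact lt_iff.mpr (Or.inr ⟨rfl, by rw [ha]; exact Bool.false_lt_true⟩)

theorem exists_isOpen_le_fst_of_snd_eq_true {a : α ×ₗ Bool} (ha : (ofLex a).2 = true) :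
    ∃ U, IsOpen U ∧ a ∈ U ∧ ∀ c ∈ U, (ofLex a).1 ≤ (ofLex c).1 := by
  let t := toLex ((ofLex a).1, false)
  refine ⟨Ioi t, isOpen_Ioi' t, ?_, fun c hc => monotone_fst t c (le_of_lt hc)⟩
  exact lt_iff.mpr (Or.inr ⟨rfl, by rw [ha]; exact Bool.false_lt_true⟩)

theorem exists_isOpen_fst_antitone_of_snd_ne {p q : α ×ₗ Bool} (hpq : (ofLex p).2 ≠ (ofLex q).2) :
    ∃ U : Set ((α ×ₗ Bool) × (α ×ₗ Bool)), IsOpen U ∧ (p, q) ∈ U ∧ ∀ r ∈ U,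
      ((ofLex r.1).1 ≤ (ofLex p).1 ∧ (ofLex q).1 ≤ (ofLex r.2).1) ∨
        ((ofLex p).1 ≤ (ofLex r.1).1 ∧ (ofLex r.2).1 ≤ (ofLex q).1) := by
  cases hp : (ofLex p).2 <;> cases hq : (ofLex q).2 <;>
    simp only [hp, hq, ne_eq, not_true_eq_false] at hpq
  · obtain ⟨U, hU, hpU, hUp⟩ := exists_isOpen_fst_le_of_snd_eq_false hp
    obtain ⟨V, hV, hqV, hVq⟩ := exists_isOpen_le_fst_of_snd_eq_true hq
    exact ⟨U ×ˢ V, hU.prod hV, ⟨hpU, hqV⟩, fun r hr => Or.inl ⟨hUp _ hr.1, hVq _ hr.2⟩⟩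
  · obtain ⟨U, hU, hpU, hUp⟩ := exists_isOpen_le_fst_of_snd_eq_true hp
    obtain ⟨V, hV, hqV, hVq⟩ := exists_isOpen_fst_le_of_snd_eq_false hq
    exact ⟨U ×ˢ V, hU.prod hV, ⟨hpU, hqV⟩, fun r hr => Or.inr ⟨hUp _ hr.1, hVq _ hr.2⟩⟩

end Prod.Lex

theorem eq_of_sub_eq_sub_of_antitone {x y x' y' : ℝ} (hsub : y' - x' = y - x)
    (h : (x' ≤ x ∧ y ≤ y') ∨ (x ≤ x' ∧ y' ≤ y)) : x' = x ∧ y' = y := by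
  rcases h with ⟨h1, h2⟩ | ⟨h1, h2⟩ <;> constructor <;> linarith

theorem measurableSet_sub_eq (b : ℝ) :
    MeasurableSet {z : Icc (0:ℝ) 1 × Icc (0:ℝ) 1 | (z.2 : ℝ) - (z.1 : ℝ) = b} :=
  (isClosed_singleton.preimage (by fun_prop :
    Continuous fun z : Icc (0:ℝ) 1 × Icc (0:ℝ) 1 => (z.2 : ℝ) - (z.1 : ℝ))).measurableSet

theorem exists_isOpen_isolating_on_line
    {s : Icc (0:ℝ) 1 × Icc (0:ℝ) 1 → SplitInterval × SplitInterval}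
    (hsel : ∀ z, splitProjSq (s z) = z) {z : Icc (0:ℝ) 1 × Icc (0:ℝ) 1}
    (hz : (ofLex (s z).1).2 ≠ (ofLex (s z).2).2) :
    ∃ U, IsOpen U ∧ s z ∈ U ∧
      s ⁻¹' U ∩ {w | (w.2 : ℝ) - (w.1 : ℝ) = (z.2 : ℝ) - (z.1 : ℝ)} ⊆ {z} := by
  have hfst : ∀ w, (ofLex (s w).1).1 = w.1 := fun w => congrArg Prod.fst (hsel w)
  have hsnd : ∀ w, (ofLex (s w).2).1 = w.2 := fun w => congrArg Prod.snd (hsel w)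
  obtain ⟨U, hU, hzU, hmono⟩ := Prod.Lex.exists_isOpen_fst_antitone_of_snd_ne hz
  refine ⟨U, hU, hzU, fun w ⟨hwU, hw⟩ => ?_⟩
  have hwz := hmono _ hwU
  simp only [hfst, hsnd, ← Subtype.coe_le_coe] at hwz
  obtain ⟨h1, h2⟩ := eq_of_sub_eq_sub_of_antitone hw hwz
  exact Prod.ext (Subtype.ext h1) (Subtype.ext h2)

/-- If `s` is a Borel-measurable selection of `P⁻¹`, then for every
`b ∈ ℝ` the intersection of the line `y - x = b` with `Z₀₁ ∪ Z₁₀` is at most countable. -/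
theorem line_inter_Z01_union_Z10_countable
    (s : Set.Icc (0:ℝ) 1 × Set.Icc (0:ℝ) 1 → SplitInterval × SplitInterval)
    (hsel : ∀ z, splitProjSq (s z) = z)
    (hBorel : ∀ U : Set (SplitInterval × SplitInterval), IsOpen U → MeasurableSet (s ⁻¹' U))
    (b : ℝ) :
    Set.Countable {z : Set.Icc (0:ℝ) 1 × Set.Icc (0:ℝ) 1 |
      (z.2 : ℝ) - (z.1 : ℝ) = b ∧
      (((ofLex (s z).1).2 = false ∧ (ofLex (s z).2).2 = true) ∨
        ((ofLex (s z).1).2 = true ∧ (ofLex (s z).2).2 = false))} := by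
  refine MeasurableSpace.countable_of_forall_subset_measurableSet fun S hS =>
    measurableSet_of_forall_isolated hBorel (measurableSet_sub_eq b) (fun z hz => (hS hz).1) ?_
  intro z hz
  obtain ⟨hline, hbits⟩ := hS hz
  have hne : (ofLex (s z).1).2 ≠ (ofLex (s z).2).2 := by
    rcases hbits with ⟨h1, h2⟩ | ⟨h1, h2⟩ <;> simp [h1, h2]
  simpa only [hline] using exists_isOpen_isolating_on_line hsel hne
end

section
/- Every strictly increasing function f ⊆ [0,1]² (i.e., a partial function whose graph satisfies: x₁ < x₂ implies f(x₁) < f(x₂)) is contained in a strictly increasing function with Borel graph (equivalently, extends to a strictly increasing Borel-measurable function defined on a Borel subset of [0,1]). -/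
/-- A subset of `[0,1]²` is a function: equal first coordinates give equal second ones. -/
def IsFunctionGraph (f : Set (Set.Icc (0:ℝ) 1 × Set.Icc (0:ℝ) 1)) : Prop :=
  ∀ p ∈ f, ∀ q ∈ f, p.1 = q.1 → p.2 = q.2

/-- A subset of `[0,1]²` is strictly increasing. -/
def IsStrictlyIncreasingGraph (f : Set (Set.Icc (0:ℝ) 1 × Set.Icc (0:ℝ) 1)) : Prop :=
  ∀ p ∈ f, ∀ q ∈ f, p.1 < q.1 → p.2 < q.2

/-!
The graph of a strictly increasing function is a chain for the product order, and so is its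
closure `K`, which is closed. A closed chain fails to be a strictly increasing graph only along
vertical and horizontal segments; over distinct abscissae these project to disjoint open
intervals of ordinates (and vice versa), so there are only countably many of them. Removing them
from `K` leaves a Borel set, and putting back the countably many points of `f` lying on them keeps
it Borel.
-/

open Set

section Fibers

variable {γ α : Type*} {K s : Set γ} {φ : γ → α}

def uniqueInFiber (K : Set γ) (φ : γ → α) : Set γ :=
  {p ∈ K | (K ∩ φ ⁻¹' {φ p}).Subsingleton}

theorem injOn_union_uniqueInFiber (hsK : s ⊆ K) (hs : InjOn φ s) :
    InjOn φ (s ∪ uniqueInFiber K φ) := by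
  have mem_K : ∀ {p}, p ∈ s ∪ uniqueInFiber K φ → p ∈ K := fun hp => hp.elim (hsK ·) (·.1)
  intro p hp q hq hpq
  by_cases hpu : p ∈ uniqueInFiber K φ
  · exact hpu.2 ⟨hpu.1, rfl⟩ ⟨mem_K hq, hpq.symm⟩
  by_cases hqu : q ∈ uniqueInFiber K φ
  · exact hqu.2 ⟨mem_K hp, hpq⟩ ⟨hqu.1, rfl⟩
  exact hs (hp.resolve_right hpu) (hq.resolve_right hqu) hpq

theorem countable_sdiff_uniqueInFiber (hsK : s ⊆ K) (hs : InjOn φ s)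
    (hc : {a | (K ∩ φ ⁻¹' {a}).Nontrivial}.Countable) :
    (s \ uniqueInFiber K φ).Countable := by
  refine MapsTo.countable_of_injOn (t := {a | (K ∩ φ ⁻¹' {a}).Nontrivial}) ?_
    (hs.mono sdiff_subset) hc
  intro p ⟨hp, hpu⟩
  exact not_subsingleton_iff.1 fun h => hpu ⟨hsK hp, h⟩

theorem measurableSet_uniqueInFiber [MeasurableSpace γ] [MeasurableSpace α]
    [MeasurableSingletonClass α] (hK : MeasurableSet K) (hφ : Measurable φ)
    (hc : {a | (K ∩ φ ⁻¹' {a}).Nontrivial}.Countable) :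
    MeasurableSet (uniqueInFiber K φ) := by
  have : uniqueInFiber K φ = K \ φ ⁻¹' {a | (K ∩ φ ⁻¹' {a}).Nontrivial} := by
    ext p
    simp [uniqueInFiber, not_nontrivial_iff]
  rw [this]
  exact hK.diff (hφ hc.measurableSet)

end Fibers

section Chains

variable {γ : Type*} [Preorder γ] {K : Set γ}

protected theorem IsChain.closure [TopologicalSpace γ] [OrderClosedTopology γ]
    (hK : IsChain (· ≤ ·) K) : IsChain (· ≤ ·) (closure K) := by
  have hcomparable : closure K ×ˢ closure K ⊆ {x : γ × γ | x.1 ≤ x.2 ∨ x.2 ≤ x.1} := by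
    rw [← closure_prod_eq]
    refine closure_minimal (fun x hx => hK.total hx.1 hx.2) ?_
    exact (isClosed_le continuous_fst continuous_snd).union
      (isClosed_le continuous_snd continuous_fst)
  exact fun p hp q hq _ => hcomparable (mk_mem_prod hp hq)

/-- The fibres of `φ` over `K` are separated by `ψ` into pairwise disjoint nonempty open
intervals, ordered like their base points. -/
theorem IsChain.countable_setOf_nontrivial_fiber {α β : Type*} [LinearOrder α] [LinearOrder β]
    [DenselyOrdered β] [TopologicalSpace β] [OrderClosedTopology β]
    [TopologicalSpace.SeparableSpace β] {φ : γ → α} {ψ : γ → β}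
    (hK : IsChain (· ≤ ·) K) (hφ : Monotone φ) (hψ : Monotone ψ)
    (hφψ : ∀ p ∈ K, ∀ q ∈ K, φ p = φ q → ψ p = ψ q → p = q) :
    {a | (K ∩ φ ⁻¹' {a}).Nontrivial}.Countable := by
  have ψ_le_of_φ_lt : ∀ p ∈ K, ∀ q ∈ K, φ p < φ q → ψ p ≤ ψ q := fun p hp q hq h =>
    hψ ((hK.total hp hq).resolve_right fun hqp => (hφ hqp).not_gt h)
  set V := {a | (K ∩ φ ⁻¹' {a}).Nontrivial}
  have spread : ∀ a : V, ∃ p ∈ K, ∃ q ∈ K, φ p = a ∧ φ q = a ∧ ψ p < ψ q := by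
    rintro ⟨a, p, ⟨hp, hpa⟩, q, ⟨hq, hqa⟩, hpq⟩
    rcases lt_or_gt_of_ne fun h => hpq (hφψ p hp q hq (hpa.trans hqa.symm) h) with h | h
    · exact ⟨p, hp, q, hq, hpa, hqa, h⟩
    · exact ⟨q, hq, p, hp, hqa, hpa, h⟩
  choose p hp q hq hpa hqa hpq using spread
  refine countable_coe_iff.1 <| Pairwise.countable_of_isOpen_disjoint
    (s := fun a => Ioo (ψ (p a)) (ψ (q a))) ?_ (fun _ => isOpen_Ioo) fun a => nonempty_Ioo.2 (hpq a)
  intro a b hab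
  wlog hlt : (a : α) < b generalizing a b
  · exact (this hab.symm ((lt_or_gt_of_ne (Subtype.coe_ne_coe.2 hab)).resolve_left hlt)).symm
  have hqp : ψ (q a) ≤ ψ (p b) :=
    ψ_le_of_φ_lt _ (hq a) _ (hp b) (by rw [hqa a, hpa b]; exact hlt)
  exact Ioo_disjoint_Ioo.2 ((min_le_left _ _).trans (hqp.trans (le_max_right _ _)))

end Chains

theorem IsChain.exists_measurableSet_superset {α β : Type*}
    [LinearOrder α] [DenselyOrdered α] [TopologicalSpace α] [OrderClosedTopology α]
    [SecondCountableTopology α] [MeasurableSpace α] [OpensMeasurableSpace α]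
    [LinearOrder β] [DenselyOrdered β] [TopologicalSpace β] [OrderClosedTopology β]
    [SecondCountableTopology β] [MeasurableSpace β] [OpensMeasurableSpace β]
    {f : Set (α × β)} (hf : IsChain (· ≤ ·) f) (hf₁ : InjOn Prod.fst f)
    (hf₂ : InjOn Prod.snd f) :
    ∃ g, f ⊆ g ∧ MeasurableSet g ∧ IsChain (· ≤ ·) g ∧ InjOn Prod.fst g ∧ InjOn Prod.snd g := by
  set K := closure f
  have hK : IsChain (· ≤ ·) K := hf.closure
  have hc₁ := hK.countable_setOf_nontrivial_fiber monotone_fst monotone_snd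
    fun _ _ _ _ h₁ h₂ => Prod.ext h₁ h₂
  have hc₂ := hK.countable_setOf_nontrivial_fiber monotone_snd monotone_fst
    fun _ _ _ _ h₂ h₁ => Prod.ext h₁ h₂
  set T := uniqueInFiber K Prod.fst ∩ uniqueInFiber K Prod.snd
  have hTK : T ⊆ K := inter_subset_left.trans (sep_subset _ _)
  refine ⟨f ∪ T, subset_union_left, ?_, hK.mono (union_subset subset_closure hTK),
    (injOn_union_uniqueInFiber subset_closure hf₁).mono
      (union_subset_union_right _ inter_subset_left),
    (injOn_union_uniqueInFiber subset_closure hf₂).mono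
      (union_subset_union_right _ inter_subset_right)⟩
  have hKm : MeasurableSet K := isClosed_closure.measurableSet
  rw [union_comm, ← union_sdiff_self, sdiff_inter]
  exact ((measurableSet_uniqueInFiber hKm measurable_fst hc₁).inter
    (measurableSet_uniqueInFiber hKm measurable_snd hc₂)).union
    ((countable_sdiff_uniqueInFiber subset_closure hf₁ hc₁).union
      (countable_sdiff_uniqueInFiber subset_closure hf₂ hc₂)).measurableSet

theorem isFunctionGraph_and_isStrictlyIncreasingGraph_iff
    {f : Set (Set.Icc (0:ℝ) 1 × Set.Icc (0:ℝ) 1)} :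
    IsFunctionGraph f ∧ IsStrictlyIncreasingGraph f ↔
      IsChain (· ≤ ·) f ∧ InjOn Prod.fst f ∧ InjOn Prod.snd f := by
  constructor
  · rintro ⟨hfun, hinc⟩
    have hf₁ : InjOn Prod.fst f := fun p hp q hq h => Prod.ext h (hfun p hp q hq h)
    refine ⟨fun p hp q hq hpq => ?_, hf₁, fun p hp q hq h => ?_⟩
    · rcases lt_trichotomy p.1 q.1 with h | h | h
      · exact Or.inl ⟨h.le, (hinc p hp q hq h).le⟩
      · exact absurd (hf₁ hp hq h) hpq
      · exact Or.inr ⟨h.le, (hinc q hq p hp h).le⟩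
    · rcases lt_trichotomy p.1 q.1 with h' | h' | h'
      · exact absurd h (hinc p hp q hq h').ne
      · exact hf₁ hp hq h'
      · exact absurd h (hinc q hq p hp h').ne'
  · rintro ⟨hf, hf₁, hf₂⟩
    refine ⟨fun p hp q hq h => congrArg Prod.snd (hf₁ hp hq h), fun p hp q hq h => ?_⟩
    have hpq : p ≤ q := (hf.total hp hq).resolve_right fun hqp => hqp.1.not_gt h
    exact hpq.2.lt_of_ne fun h' => h.ne (congrArg Prod.fst (hf₂ hp hq h'))

/-- Every strictly increasing function `f ⊆ [0,1]²` is contained in a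
strictly increasing function with Borel graph. -/
theorem strictly_increasing_extends_to_borel
    (f : Set (Set.Icc (0:ℝ) 1 × Set.Icc (0:ℝ) 1))
    (hfun : IsFunctionGraph f) (hinc : IsStrictlyIncreasingGraph f) :
    ∃ g : Set (Set.Icc (0:ℝ) 1 × Set.Icc (0:ℝ) 1),
      f ⊆ g ∧ MeasurableSet g ∧ IsFunctionGraph g ∧ IsStrictlyIncreasingGraph g := by
  obtain ⟨hf, hf₁, hf₂⟩ := isFunctionGraph_and_isStrictlyIncreasingGraph_iff.1 ⟨hfun, hinc⟩
  obtain ⟨g, hfg, hg, hgc, hg₁, hg₂⟩ := hf.exists_measurableSet_superset hf₁ hf₂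
  exact ⟨g, hfg, hg, isFunctionGraph_and_isStrictlyIncreasingGraph_iff.2 ⟨hgc, hg₁, hg₂⟩⟩
end
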